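/- Let n ∈ ℕ and k1, k2 ∈ ℝ. The inner product IP : {0,1}^n × {0,1}^n → {0,1}, IP(x,y) = x·y mod 2, is a (k1, k2, 2^{−(1 + k1 + k2 − n)/2}) X1-strong two-source extractor against classical product-type knowledge (with output length m = 1). -/

import Mathlib

open Matrix Kronecker BigOperators Finset ComplexOrder

/-- Bit strings of length `n`. -/
abbrev BS (n : ℕ) := Fin n → Bool

/-- Embedding of a bit into the field with two elements. -/
def toZ2 (b : Bool) : ZMod 2 := if b then 1 else 0

/-- Inner product modulo 2 of two bit strings. -/
def ipBool {n : ℕ} (x y : BS n) : Bool := decide ((∑ i, toZ2 (x i) * toZ2 (y i)) = 1)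

/-- Multiplication of a bit string by a matrix over F₂. -/
def mulVecBool {n : ℕ} (L : Matrix (Fin n) (Fin n) (ZMod 2)) (x : BS n) : BS n :=
  fun i => decide ((L.mulVec fun j => toZ2 (x j)) i = 1)

/-- The `deor` extractor associated to a family of matrices over F₂. -/
def deor {n m : ℕ} (A : Fin m → Matrix (Fin n) (Fin n) (ZMod 2)) (x y : BS n) : BS m :=
  fun i => ipBool (mulVecBool (A i) x) y

/-- Trace norm of a complex matrix: `tr √(SᴴS)`. -/
noncomputable def traceNorm {B : Type*} [Fintype B] [DecidableEq B] (S : Matrix B B ℂ) : ℝ :=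
  (((Matrix.posSemidef_conjTranspose_mul_self S).1.eigenvectorUnitary : Matrix B B ℂ) *
    Matrix.diagonal (((↑) : ℝ → ℂ) ∘ Real.sqrt ∘ (Matrix.posSemidef_conjTranspose_mul_self S).1.eigenvalues) *
    (star (Matrix.posSemidef_conjTranspose_mul_self S).1.eigenvectorUnitary : Matrix B B ℂ)).trace.re

/-- Trace distance between two matrices. -/
noncomputable def traceDist {B : Type*} [Fintype B] [DecidableEq B] (ρ σ : Matrix B B ℂ) : ℝ :=
  (1/2) * traceNorm (ρ - σ)

/-- A density matrix: positive semidefinite with unit trace. -/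
def IsDensity {B : Type*} [Fintype B] (ρ : Matrix B B ℂ) : Prop :=
  ρ.PosSemidef ∧ ρ.trace = 1

/-- A cq-state given by its family of (subnormalized) conditional operators. -/
def IsCQ {X B : Type*} [Fintype X] [Fintype B] (ρ : X → Matrix B B ℂ) : Prop :=
  (∀ x, (ρ x).PosSemidef) ∧ (∑ x, (ρ x).trace) = 1

/-- The full matrix `Σ_x |x⟩⟨x| ⊗ ρ_{B∧x}` of a cq-state. -/
noncomputable def cqMatrix {X B : Type*} [Fintype X] [DecidableEq X] [Fintype B]
    (ρ : X → Matrix B B ℂ) : Matrix (X × B) (X × B) ℂ :=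
  ∑ x, (Matrix.single x x (1:ℂ)) ⊗ₖ ρ x

/-- Conditional min-entropy of a cq-state: the sup over density matrices σ and reals w with
`ρ_{B∧x} ≤ 2^{-w}·σ` for all `x` (Loewner order), of `w`; `⊥ = -∞` if no such pair exists. -/
noncomputable def qCondHmin {X B : Type*} [Fintype X] [Fintype B]
    (ρ : X → Matrix B B ℂ) : EReal :=
  sSup {z : EReal | ∃ w : ℝ, z = (w : EReal) ∧ ∃ σ : Matrix B B ℂ, σ.PosSemidef ∧ σ.trace = 1 ∧
    ∀ x, (((2:ℝ) ^ (-w)) • σ - ρ x).PosSemidef}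

/-- The maximally mixed state on `m` qubits. -/
noncomputable def mixed (m : ℕ) : Matrix (BS m) (BS m) ℂ := ((2:ℂ)^m)⁻¹ • 1

/-- A finitely supported probability distribution. -/
def IsDist {α : Type*} [Fintype α] (P : α → ℝ) : Prop := (∀ a, 0 ≤ P a) ∧ ∑ a, P a = 1

/-- Total variation distance. -/
noncomputable def TV {α : Type*} [Fintype α] (Q R : α → ℝ) : ℝ := (1/2) * ∑ a, |Q a - R a|

/-- Min-entropy of a distribution. -/
noncomputable def Hmin {X : Type*} [Fintype X] [Nonempty X] (P : X → ℝ) : ℝ :=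
  - Real.logb 2 (⨆ x, P x)

/-- Conditional min-entropy of a joint distribution. -/
noncomputable def HminCond {X Z : Type*} [Fintype X] [Nonempty X] [Fintype Z]
    (P : X → Z → ℝ) : ℝ :=
  - Real.logb 2 (∑ z, ⨆ x, P x z)

/-- `(k1,k2,ε)` X1-strong two-source extractor (no side information). -/
def IsStrongExt (n1 n2 m : ℕ) (Ext : BS n1 → BS n2 → BS m) (k1 k2 ε : ℝ) : Prop :=
  ∀ (P1 : BS n1 → ℝ) (P2 : BS n2 → ℝ), IsDist P1 → IsDist P2 →
    k1 ≤ Hmin P1 → k2 ≤ Hmin P2 →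
    TV (fun p : BS m × BS n1 => ∑ x2, if Ext p.2 x2 = p.1 then P1 p.2 * P2 x2 else 0)
       (fun p : BS m × BS n1 => ((2:ℝ)^m)⁻¹ * P1 p.2) ≤ ε

/-- `(k1,k2,ε)` X1-strong two-source extractor against classical product-type knowledge. -/
def IsStrongExtCPT (n1 n2 m : ℕ) (Ext : BS n1 → BS n2 → BS m) (k1 k2 ε : ℝ) : Prop :=
  ∀ (Z1 Z2 : Type) [Fintype Z1] [Fintype Z2],
    ∀ (P1 : BS n1 → Z1 → ℝ) (P2 : BS n2 → Z2 → ℝ),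
    IsDist (fun p : BS n1 × Z1 => P1 p.1 p.2) →
    IsDist (fun p : BS n2 × Z2 => P2 p.1 p.2) →
    k1 ≤ HminCond P1 → k2 ≤ HminCond P2 →
    TV (fun q : BS m × BS n1 × Z1 × Z2 =>
          ∑ x2, if Ext q.2.1 x2 = q.1 then P1 q.2.1 q.2.2.1 * P2 x2 q.2.2.2 else 0)
       (fun q : BS m × BS n1 × Z1 × Z2 =>
          ((2:ℝ)^m)⁻¹ * P1 q.2.1 q.2.2.1 * ∑ x2, P2 x2 q.2.2.2) ≤ ε

/-- `(k1,k2,ε)` weak two-source extractor against classical product-type knowledge. -/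
def IsWeakExtCPT (n1 n2 m : ℕ) (Ext : BS n1 → BS n2 → BS m) (k1 k2 ε : ℝ) : Prop :=
  ∀ (Z1 Z2 : Type) [Fintype Z1] [Fintype Z2],
    ∀ (P1 : BS n1 → Z1 → ℝ) (P2 : BS n2 → Z2 → ℝ),
    IsDist (fun p : BS n1 × Z1 => P1 p.1 p.2) →
    IsDist (fun p : BS n2 × Z2 => P2 p.1 p.2) →
    k1 ≤ HminCond P1 → k2 ≤ HminCond P2 →
    TV (fun q : BS m × Z1 × Z2 =>
          ∑ x1, ∑ x2, if Ext x1 x2 = q.1 then P1 x1 q.2.1 * P2 x2 q.2.2 else 0)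
       (fun q : BS m × Z1 × Z2 =>
          ((2:ℝ)^m)⁻¹ * (∑ x1, P1 x1 q.2.1) * ∑ x2, P2 x2 q.2.2) ≤ ε

/-- `(k1,k2,ε)` X1-strong two-source extractor against classical knowledge in the Markov model. -/
def IsStrongExtCMarkov (n1 n2 m : ℕ) (Ext : BS n1 → BS n2 → BS m) (k1 k2 ε : ℝ) : Prop :=
  ∀ (C : Type) [Fintype C], ∀ (P : BS n1 → BS n2 → C → ℝ),
    IsDist (fun q : BS n1 × BS n2 × C => P q.1 q.2.1 q.2.2) →
    (∀ x1 x2 c, P x1 x2 c * (∑ x1', ∑ x2', P x1' x2' c)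
        = (∑ x2', P x1 x2' c) * (∑ x1', P x1' x2 c)) →
    k1 ≤ HminCond (fun x1 c => ∑ x2, P x1 x2 c) →
    k2 ≤ HminCond (fun x2 c => ∑ x1, P x1 x2 c) →
    TV (fun q : BS m × BS n1 × C => ∑ x2, if Ext q.2.1 x2 = q.1 then P q.2.1 x2 q.2.2 else 0)
       (fun q : BS m × BS n1 × C => ((2:ℝ)^m)⁻¹ * ∑ x2, P q.2.1 x2 q.2.2) ≤ ε

/-- The output cq-state `ρ_{Ext(X1,X2) X1 C1 C2}` for product-type quantum side information. -/
noncomputable def qStrongOut {n1 n2 m : ℕ} {C1 C2 : Type}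
    [Fintype C1] [Fintype C2]
    (Ext : BS n1 → BS n2 → BS m)
    (ρ1 : BS n1 → Matrix C1 C1 ℂ) (ρ2 : BS n2 → Matrix C2 C2 ℂ) :
    Matrix (BS m × (BS n1 × C1) × C2) (BS m × (BS n1 × C1) × C2) ℂ :=
  ∑ x1, ∑ x2, (Matrix.single (Ext x1 x2) (Ext x1 x2) (1:ℂ)) ⊗ₖ
    (((Matrix.single x1 x1 (1:ℂ)) ⊗ₖ ρ1 x1) ⊗ₖ ρ2 x2)

/-- `(k1,k2,ε)` X1-strong two-source extractor against quantum product-type knowledge. -/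
def IsStrongExtQPT (n1 n2 m : ℕ) (Ext : BS n1 → BS n2 → BS m) (k1 k2 ε : ℝ) : Prop :=
  ∀ (C1 C2 : Type) [Fintype C1] [DecidableEq C1] [Fintype C2] [DecidableEq C2],
    ∀ (ρ1 : BS n1 → Matrix C1 C1 ℂ) (ρ2 : BS n2 → Matrix C2 C2 ℂ),
    IsCQ ρ1 → IsCQ ρ2 →
    (k1 : EReal) ≤ qCondHmin ρ1 → (k2 : EReal) ≤ qCondHmin ρ2 →
    traceDist (qStrongOut Ext ρ1 ρ2) (mixed m ⊗ₖ (cqMatrix ρ1 ⊗ₖ ∑ x2, ρ2 x2)) ≤ ε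

/-- `(k1,k2,ε)` weak two-source extractor against quantum product-type knowledge. -/
def IsWeakExtQPT (n1 n2 m : ℕ) (Ext : BS n1 → BS n2 → BS m) (k1 k2 ε : ℝ) : Prop :=
  ∀ (C1 C2 : Type) [Fintype C1] [DecidableEq C1] [Fintype C2] [DecidableEq C2],
    ∀ (ρ1 : BS n1 → Matrix C1 C1 ℂ) (ρ2 : BS n2 → Matrix C2 C2 ℂ),
    IsCQ ρ1 → IsCQ ρ2 →
    (k1 : EReal) ≤ qCondHmin ρ1 → (k2 : EReal) ≤ qCondHmin ρ2 →
    traceDist (∑ x1, ∑ x2, (Matrix.single (Ext x1 x2) (Ext x1 x2) (1:ℂ)) ⊗ₖ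
        ((ρ1 x1) ⊗ₖ ρ2 x2))
      (mixed m ⊗ₖ ((∑ x1, ρ1 x1) ⊗ₖ ∑ x2, ρ2 x2)) ≤ ε

/-- `(k1,k2,ε)` X1-strong two-source extractor against quantum knowledge in the Markov model,
in decomposed form. -/
def IsStrongExtQMarkov (n1 n2 m : ℕ) (Ext : BS n1 → BS n2 → BS m) (k1 k2 ε : ℝ) : Prop :=
  ∀ (Z C1 C2 : Type) [Fintype Z] [DecidableEq Z]
      [Fintype C1] [DecidableEq C1] [Fintype C2] [DecidableEq C2],
    ∀ (P : Z → ℝ) (ρ1 : Z → BS n1 → Matrix C1 C1 ℂ) (ρ2 : Z → BS n2 → Matrix C2 C2 ℂ),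
    IsDist P → (∀ z, IsCQ (ρ1 z)) → (∀ z, IsCQ (ρ2 z)) →
    (k1 : EReal) ≤ qCondHmin (fun x1 : BS n1 =>
      ∑ z, P z • (((ρ1 z x1) ⊗ₖ ∑ x2, ρ2 z x2) ⊗ₖ Matrix.single z z (1:ℂ))) →
    (k2 : EReal) ≤ qCondHmin (fun x2 : BS n2 =>
      ∑ z, P z • (((∑ x1, ρ1 z x1) ⊗ₖ ρ2 z x2) ⊗ₖ Matrix.single z z (1:ℂ))) →
    traceDist
      (∑ x1, ∑ x2, ∑ z, P z •
        ((Matrix.single (Ext x1 x2) (Ext x1 x2) (1:ℂ)) ⊗ₖ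
          ((Matrix.single x1 x1 (1:ℂ)) ⊗ₖ
            (((ρ1 z x1) ⊗ₖ ρ2 z x2) ⊗ₖ Matrix.single z z (1:ℂ)))))
      (mixed m ⊗ₖ cqMatrix (fun x1 : BS n1 =>
        ∑ z, P z • (((ρ1 z x1) ⊗ₖ ∑ x2, ρ2 z x2) ⊗ₖ Matrix.single z z (1:ℂ))))
      ≤ ε

/-! For fixed `x1, z1, z2` the deviation of the output bit from uniform is
`½ · P1(x1,z1) · |Σ_{x2} (-1)^{x1·x2} P2(x2,z2)|`, a Hadamard coefficient of `P2(·,z2)`.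
Cauchy–Schwarz in `x1` together with Parseval bounds the sum over `x1` by the two collision
probabilities, and `Σ_x P(x,z)² ≤ max_x P(x,z) · P(z)`. A second Cauchy–Schwarz in `z` gives
`Σ_z √(max_x P(x,z) · P(z)) ≤ √(Σ_z max_x P(x,z)) = 2^{-H_min(X|Z)/2}`. -/

lemma AddChar.map_sum_eq_prod {ι A M : Type*} [AddCommMonoid A] [CommMonoid M]
    (ψ : AddChar A M) (s : Finset ι) (f : ι → A) :
    ψ (∑ i ∈ s, f i) = ∏ i ∈ s, ψ (f i) := by
  classical
  induction s using Finset.induction_on with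
  | empty => simp
  | insert a s ha ih => rw [sum_insert ha, prod_insert ha, AddChar.map_add_eq_mul, ih]

noncomputable def signChar : AddChar (ZMod 2) ℝ :=
  AddChar.zmodChar 2 (neg_one_sq : (-1 : ℝ) ^ 2 = 1)

lemma signChar_one : signChar 1 = -1 := pow_one _

def ipSign {n : ℕ} (x y : BS n) : ℝ := if ipBool x y then -1 else 1

lemma ipSign_eq_prod {n : ℕ} (x y : BS n) :
    ipSign x y = ∏ i, signChar (toZ2 (x i) * toZ2 (y i)) := by
  rw [← AddChar.map_sum_eq_prod, ipSign, ipBool]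
  generalize ∑ i, toZ2 (x i) * toZ2 (y i) = a
  obtain rfl | rfl : a = 0 ∨ a = 1 := by decide +revert
  · simp
  · simp [signChar_one]

lemma sum_signChar_mul_signChar (a a' : Bool) :
    ∑ b, signChar (toZ2 b * toZ2 a) * signChar (toZ2 b * toZ2 a') = if a = a' then 2 else 0 := by
  cases a <;> cases a' <;> norm_num [toZ2, signChar_one]

lemma sum_ipSign_mul_ipSign {n : ℕ} (y y' : BS n) :
    ∑ x, ipSign x y * ipSign x y' = if y = y' then 2 ^ n else 0 := by
  simp_rw [ipSign_eq_prod, ← prod_mul_distrib]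
  rw [← Fintype.prod_sum fun i b =>
    signChar (toZ2 b * toZ2 (y i)) * signChar (toZ2 b * toZ2 (y' i))]
  simp_rw [sum_signChar_mul_signChar, Fintype.prod_ite_zero, prod_const, card_univ,
    Fintype.card_fin, funext_iff]

lemma sum_sq_sum_ipSign_mul {n : ℕ} (q : BS n → ℝ) :
    ∑ x, (∑ y, ipSign x y * q y) ^ 2 = 2 ^ n * ∑ y, q y ^ 2 := by
  calc ∑ x, (∑ y, ipSign x y * q y) ^ 2
      = ∑ y, ∑ y', (∑ x, ipSign x y * ipSign x y') * (q y * q y') := by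
        simp_rw [sq, sum_mul_sum, sum_mul]
        rw [sum_comm]
        refine sum_congr rfl fun y _ => ?_
        rw [sum_comm]
        exact sum_congr rfl fun y' _ => sum_congr rfl fun x _ => by ring
    _ = 2 ^ n * ∑ y, q y ^ 2 := by
        simp_rw [sum_ipSign_mul_ipSign, ite_mul, zero_mul, sum_ite_eq, mem_univ, if_true,
          mul_sum, sq]

lemma sum_sq_le_iSup_mul_sum {X : Type*} [Fintype X] (f : X → ℝ) (hf : ∀ x, 0 ≤ f x) :
    ∑ x, f x ^ 2 ≤ (⨆ x, f x) * ∑ x, f x := by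
  rw [mul_sum]
  gcongr with x
  rw [sq]
  exact mul_le_mul_of_nonneg_right (le_ciSup (Set.finite_range f).bddAbove x) (hf x)

lemma sum_mul_abs_sum_ipSign_mul_le {n : ℕ} (f g : BS n → ℝ) (hf : ∀ x, 0 ≤ f x)
    (hg : ∀ y, 0 ≤ g y) :
    ∑ x, f x * |∑ y, ipSign x y * g y|
      ≤ √(2 ^ n) * √((⨆ x, f x) * ∑ x, f x) * √((⨆ y, g y) * ∑ y, g y) := by
  calc ∑ x, f x * |∑ y, ipSign x y * g y|
      ≤ √(∑ x, f x ^ 2) * √(∑ x, |∑ y, ipSign x y * g y| ^ 2) :=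
        Real.sum_mul_le_sqrt_mul_sqrt _ _ _
    _ = √(∑ x, f x ^ 2) * √(2 ^ n * ∑ y, g y ^ 2) := by
        simp_rw [sq_abs, sum_sq_sum_ipSign_mul]
    _ ≤ √((⨆ x, f x) * ∑ x, f x) * √(2 ^ n * ((⨆ y, g y) * ∑ y, g y)) := by
        gcongr
        · exact sum_sq_le_iSup_mul_sum f hf
        · exact sum_sq_le_iSup_mul_sum g hg
    _ = √(2 ^ n) * √((⨆ x, f x) * ∑ x, f x) * √((⨆ y, g y) * ∑ y, g y) := by
        rw [Real.sqrt_mul (by positivity : (0 : ℝ) ≤ 2 ^ n)]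
        ring

section MinEntropy

variable {X Z : Type*} [Fintype X] [Nonempty X] [Fintype Z] {P : X → Z → ℝ} {k : ℝ}

lemma sum_iSup_le_of_le_HminCond (hP : IsDist fun p : X × Z => P p.1 p.2)
    (hk : k ≤ HminCond P) : ∑ z, ⨆ x, P x z ≤ 2 ^ (-k) := by
  have hpos : 0 < ∑ z, ⨆ x, P x z := by
    have hle : (1 : ℝ) ≤ ∑ _x : X, ∑ z, ⨆ x, P x z := by
      rw [← hP.2, Fintype.sum_prod_type]
      gcongr with x _ z _
      exact le_ciSup (Set.finite_range fun x => P x z).bddAbove x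
    rw [sum_const, nsmul_eq_mul] at hle
    exact pos_of_mul_pos_right (one_pos.trans_le hle) (Nat.cast_nonneg _)
  rw [← Real.logb_le_iff_le_rpow one_lt_two hpos]
  unfold HminCond at hk
  linarith

lemma sum_sqrt_iSup_mul_sum_le_of_le_HminCond (hP : IsDist fun p : X × Z => P p.1 p.2)
    (hk : k ≤ HminCond P) : ∑ z, √((⨆ x, P x z) * ∑ x, P x z) ≤ 2 ^ (-k / 2) := by
  have hsup : ∀ z, 0 ≤ ⨆ x, P x z := fun z =>
    le_ciSup_of_le (Set.finite_range _).bddAbove (Classical.arbitrary X) (hP.1 (_, z))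
  calc ∑ z, √((⨆ x, P x z) * ∑ x, P x z)
      = ∑ z, √(⨆ x, P x z) * √(∑ x, P x z) := by simp_rw [Real.sqrt_mul (hsup _)]
    _ ≤ √(∑ z, ⨆ x, P x z) * √(∑ z, ∑ x, P x z) :=
        Real.sum_sqrt_mul_sqrt_le _ hsup fun z => sum_nonneg fun x _ => hP.1 (x, z)
    _ ≤ √(2 ^ (-k)) := by
        rw [sum_comm, ← Fintype.sum_prod_type' P, hP.2, Real.sqrt_one, mul_one]
        gcongr
        exact sum_iSup_le_of_le_HminCond hP hk
    _ = 2 ^ (-k / 2) := by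
        rw [Real.sqrt_eq_rpow, ← Real.rpow_mul zero_le_two]
        ring_nf

end MinEntropy

lemma abs_sum_ite_ipBool_sub_half {n : ℕ} (v : BS 1) (x : BS n) {a : ℝ} (ha : 0 ≤ a)
    (g : BS n → ℝ) :
    |(∑ y, if (fun _ : Fin 1 => ipBool x y) = v then a * g y else 0)
        - ((2 : ℝ) ^ 1)⁻¹ * a * ∑ y, g y|
      = 1 / 2 * (a * |∑ y, ipSign x y * g y|) := by
  obtain ⟨c, rfl⟩ : ∃ c, v = fun _ => c :=
    ⟨v 0, funext fun i => congrArg v (Subsingleton.elim i 0)⟩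
  have hdev : (∑ y, if (fun _ : Fin 1 => ipBool x y) = (fun _ => c) then a * g y else 0)
      - ((2 : ℝ) ^ 1)⁻¹ * a * ∑ y, g y
      = (if c then -1 else 1) * (1 / 2 * a) * ∑ y, ipSign x y * g y := by
    rw [mul_sum, mul_sum, ← sum_sub_distrib]
    refine sum_congr rfl fun y _ => ?_
    simp only [funext_iff, forall_const, ipSign]
    cases ipBool x y <;> cases c <;> norm_num <;> ring
  rw [hdev, abs_mul, abs_mul, abs_mul, abs_of_nonneg ha]
  cases c <;> norm_num [mul_assoc]

lemma TV_ipBool_eq {n : ℕ} {Z1 Z2 : Type*} [Fintype Z1] [Fintype Z2] (P1 : BS n → Z1 → ℝ)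
    (P2 : BS n → Z2 → ℝ) (hP1 : ∀ x z, 0 ≤ P1 x z) :
    TV (fun q : BS 1 × BS n × Z1 × Z2 =>
          ∑ x2, if (fun _ : Fin 1 => ipBool q.2.1 x2) = q.1
            then P1 q.2.1 q.2.2.1 * P2 x2 q.2.2.2 else 0)
       (fun q : BS 1 × BS n × Z1 × Z2 =>
          ((2 : ℝ) ^ 1)⁻¹ * P1 q.2.1 q.2.2.1 * ∑ x2, P2 x2 q.2.2.2)
      = 1 / 2 * ∑ x1, ∑ z1, ∑ z2, P1 x1 z1 * |∑ x2, ipSign x1 x2 * P2 x2 z2| := by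
  simp only [TV, Fintype.sum_prod_type, abs_sum_ite_ipBool_sub_half _ _ (hP1 _ _), sum_const,
    card_univ, Fintype.card_fun, Fintype.card_bool, Fintype.card_fin]
  ring_nf
  simp only [← sum_mul]

lemma sum_mul_abs_sum_ipSign_le_of_le_HminCond {n : ℕ} {Z1 Z2 : Type*} [Fintype Z1]
    [Fintype Z2]
    {P1 : BS n → Z1 → ℝ} {P2 : BS n → Z2 → ℝ} {k1 k2 : ℝ}
    (hP1 : IsDist fun p : BS n × Z1 => P1 p.1 p.2) (hP2 : IsDist fun p : BS n × Z2 => P2 p.1 p.2)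
    (hk1 : k1 ≤ HminCond P1) (hk2 : k2 ≤ HminCond P2) :
    ∑ x1, ∑ z1, ∑ z2, P1 x1 z1 * |∑ x2, ipSign x1 x2 * P2 x2 z2|
      ≤ 2 ^ ((n - k1 - k2) / 2) := by
  have hsqrt : √((2 : ℝ) ^ n) = 2 ^ ((n : ℝ) / 2) := by
    rw [Real.sqrt_eq_rpow, ← Real.rpow_natCast, ← Real.rpow_mul zero_le_two]
    ring_nf
  calc ∑ x1, ∑ z1, ∑ z2, P1 x1 z1 * |∑ x2, ipSign x1 x2 * P2 x2 z2|
      = ∑ z1, ∑ z2, ∑ x1, P1 x1 z1 * |∑ x2, ipSign x1 x2 * P2 x2 z2| := by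
        rw [sum_comm]
        exact sum_congr rfl fun _ _ => sum_comm
    _ ≤ ∑ z1, ∑ z2, √(2 ^ n) * √((⨆ x, P1 x z1) * ∑ x, P1 x z1)
          * √((⨆ x, P2 x z2) * ∑ x, P2 x z2) := by
        gcongr with z1 _ z2 _
        exact sum_mul_abs_sum_ipSign_mul_le _ _ (fun x => hP1.1 (x, z1)) fun x => hP2.1 (x, z2)
    _ = √(2 ^ n) * ((∑ z1, √((⨆ x, P1 x z1) * ∑ x, P1 x z1))
          * ∑ z2, √((⨆ x, P2 x z2) * ∑ x, P2 x z2)) := by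
        simp_rw [sum_mul_sum, mul_sum, mul_assoc]
    _ ≤ 2 ^ ((n : ℝ) / 2) * (2 ^ (-k1 / 2) * 2 ^ (-k2 / 2)) := by
        rw [hsqrt]
        gcongr
        · exact sum_sqrt_iSup_mul_sum_le_of_le_HminCond hP1 hk1
        · exact sum_sqrt_iSup_mul_sum_le_of_le_HminCond hP2 hk2
    _ = 2 ^ ((n - k1 - k2) / 2) := by
        rw [← Real.rpow_add two_pos, ← Real.rpow_add two_pos]
        ring_nf

theorem stmt18 (n : ℕ) (k1 k2 : ℝ) :
    IsStrongExtCPT n n 1 (fun x y => fun _ => ipBool x y) k1 k2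
      ((2:ℝ) ^ (-(1 + k1 + k2 - (n:ℝ))/2)) := by
  intro Z1 Z2 _ _ P1 P2 hP1 hP2 hk1 hk2
  calc _ = 1 / 2 * ∑ x1, ∑ z1, ∑ z2, P1 x1 z1 * |∑ x2, ipSign x1 x2 * P2 x2 z2| :=
        TV_ipBool_eq P1 P2 fun x z => hP1.1 (x, z)
    _ ≤ 2 ^ (-1 : ℝ) * 2 ^ ((n - k1 - k2) / 2) := by
        rw [Real.rpow_neg_one, one_div]
        gcongr
        exact sum_mul_abs_sum_ipSign_le_of_le_HminCond hP1 hP2 hk1 hk2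
    _ ≤ 2 ^ (-(1 + k1 + k2 - n) / 2) := by
        rw [← Real.rpow_add two_pos]
        exact Real.rpow_le_rpow_of_exponent_le one_le_two (by linarith)
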